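/- Let h ∈ ℝ, let f : ℝ₊ → [0,∞) be C³ with f'(1) = 0, and define L(λ) = v^{h/3} f(u) with v = λ₁λ₂², u = λ₁/λ₂. Define U₁(u) = κ(h)f(u) + (2h/3)uf'(u) + u²f''(u) and U₂(u) = 2κ(h)uf(u) + (h/3 − 1)u²f'(u) + (2u² + u³)·f'(u)/(u−1) − u³f''(u), where f'(u)/(u−1) is extended continuously at u = 1 by f''(1). Suppose φ ∈ C²([0,1]) satisfies φ(0) = 0, φ''(0) = 0, φ' > 0 on [0,1], and with u(r) = rφ'(r)/φ(r), v(r) = φ'(r)(φ(r)/r)², solves U₁(u(r)) φ''(r) + U₂(u(r)) (1/r)(φ'(r) − φ(r)/r) = μ r v(r)^{1−h/3} u(r) for r ∈ (0,1). Then φ solves D_r[ L,₁(φ'(r), φ(r)/r) ] + (2/r)[ L,₁(φ'(r), φ(r)/r) − (1/2) L,₂(φ'(r), φ(r)/r) ] = μ φ(r) on (0,1). Moreover, if g(u(1)) = 0, where g(u) = (h/3)f(u) + uf'(u), then L,₁(φ'(1), φ(1)) = 0. -/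

import Mathlib

/-!
Write `p = h/3`, `u = λ₁/λ₂`, `v = λ₁λ₂²` and `g(u) = p f(u) + u f'(u)`. Then
`L,₁ = v^p g(u)/λ₁` and `L,₂ = v^p (2p f(u) − u f'(u))/λ₂`. Along `λ = (φ', φ/r)` we have
`(φ/r)' = (φ' − φ/r)/r`, and the chain rule turns the Euler–Lagrange expression into
`v^p/φ'² · (U₁(u) φ'' + U₂(u)(φ' − φ/r)/r)`, after writing `f'(u) = (u − 1) · f'(u)/(u − 1)`,
which `f'(1) = 0` makes valid at `u = 1` as well. The radial equation makes this `μ r v u/φ'² = μ φ`.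
The function `φ` is positive on `(0, 1]` because `φ(0) = 0` and `φ' > 0`.
-/

open Set

noncomputable section

/-- `κ(h) = (h/3)(h/3 − 1)`. -/
def kap (h : ℝ) : ℝ := (h / 3) * (h / 3 - 1)

/-- The quotient `f'(u)/(u−1)`, extended continuously at `u = 1` by `f''(1)`. -/
noncomputable def Qf (f : ℝ → ℝ) (u : ℝ) : ℝ :=
  if u = 1 then deriv (deriv f) 1 else deriv f u / (u - 1)

/-- `U₁(u) = κ(h)f(u) + (2h/3)uf'(u) + u²f''(u)`. -/
noncomputable def U1 (h : ℝ) (f : ℝ → ℝ) (u : ℝ) : ℝ :=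
  kap h * f u + (2 * h / 3) * u * deriv f u + u ^ 2 * deriv (deriv f) u

/-- `U₂(u) = 2κ(h)uf(u) + (h/3 − 1)u²f'(u) + (2u² + u³)f'(u)/(u−1) − u³f''(u)`. -/
noncomputable def U2 (h : ℝ) (f : ℝ → ℝ) (u : ℝ) : ℝ :=
  2 * kap h * u * f u + (h / 3 - 1) * u ^ 2 * deriv f u
    + (2 * u ^ 2 + u ^ 3) * Qf f u - u ^ 3 * deriv (deriv f) u

open Topology

def scaleLagrangian (p : ℝ) (f : ℝ → ℝ) (s c : ℝ) : ℝ := (s * c ^ 2) ^ p * f (s / c)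

def boundaryFun (p : ℝ) (f : ℝ → ℝ) (u : ℝ) : ℝ := p * f u + u * deriv f u

section

variable {p : ℝ} {f : ℝ → ℝ}

lemma Qf_mul_sub_one (hf'1 : deriv f 1 = 0) (u : ℝ) : Qf f u * (u - 1) = deriv f u := by
  unfold Qf
  split_ifs with hu
  · simp [hu, hf'1]
  · exact div_mul_cancel₀ _ (sub_ne_zero.mpr hu)

lemma hasDerivAt_scaleLagrangian_fst {s c : ℝ} (hs : s ≠ 0) (hc : c ≠ 0)
    (hf : DifferentiableAt ℝ f (s / c)) :
    HasDerivAt (fun x => scaleLagrangian p f x c)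
      ((s * c ^ 2) ^ p * boundaryFun p f (s / c) / s) s := by
  have hV : s * c ^ 2 ≠ 0 := by positivity
  have hpow := ((hasDerivAt_id s).mul_const (c ^ 2)).rpow_const (p := p) (Or.inl hV)
  have hcomp := hf.hasDerivAt.comp s ((hasDerivAt_id s).div_const c)
  refine (hpow.mul hcomp).congr_deriv ?_
  simp only [id, Function.comp_apply, boundaryFun]
  rw [Real.rpow_sub_one hV]
  field_simp

lemma hasDerivAt_scaleLagrangian_snd {s c : ℝ} (hs : s ≠ 0) (hc : c ≠ 0)
    (hf : DifferentiableAt ℝ f (s / c)) :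
    HasDerivAt (fun y => scaleLagrangian p f s y)
      ((s * c ^ 2) ^ p * (2 * p * f (s / c) - s / c * deriv f (s / c)) / c) c := by
  have hV : s * c ^ 2 ≠ 0 := by positivity
  have hpow := ((hasDerivAt_pow 2 c).const_mul s).rpow_const (p := p) (Or.inl hV)
  have hcomp := hf.hasDerivAt.comp c ((hasDerivAt_id c).fun_inv hc |>.const_mul s)
  refine (hpow.mul hcomp).congr_deriv ?_
  simp only [id, Function.comp_apply]
  rw [Real.rpow_sub_one hV]
  field_simp
  ring

lemma hasDerivAt_boundaryFun {u : ℝ} (hf : ContDiffAt ℝ 2 f u) :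
    HasDerivAt (boundaryFun p f) ((p + 1) * deriv f u + u * deriv (deriv f) u) u := by
  have hf₁ := (hf.differentiableAt (by norm_num)).hasDerivAt
  have hf₂ := ((hf.derivWithin (m := 1) (by norm_num)).differentiableAt one_ne_zero).hasDerivAt
  refine ((hf₁.const_mul p).add ((hasDerivAt_id u).mul hf₂)).congr_deriv ?_
  simp only [id]
  ring

lemma hasDerivAt_deriv_scaleLagrangian_fst_comp {x y : ℝ → ℝ} {x' y' r : ℝ}
    (hx : HasDerivAt x x' r) (hy : HasDerivAt y y' r) (hxr : x r ≠ 0) (hyr : y r ≠ 0)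
    (hf : ContDiffAt ℝ 2 f (x r / y r)) :
    HasDerivAt (fun t => deriv (fun s => scaleLagrangian p f s (y t)) (x t))
      ((x r * y r ^ 2) ^ p *
        (p * (x' / x r + 2 * y' / y r) * boundaryFun p f (x r / y r) / x r
          + ((p + 1) * deriv f (x r / y r) + x r / y r * deriv (deriv f) (x r / y r))
              * (x' / y r - x r * y' / y r ^ 2) / x r
          - boundaryFun p f (x r / y r) * x' / x r ^ 2)) r := by
  have hnear : ∀ᶠ t in 𝓝 r, x t ≠ 0 ∧ y t ≠ 0 ∧ ContDiffAt ℝ 2 f (x t / y t) :=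
    (hx.continuousAt.eventually_ne hxr).and <| (hy.continuousAt.eventually_ne hyr).and <|
      (hx.continuousAt.div hy.continuousAt hyr).eventually (hf.eventually (by simp))
  have hL₁ : (fun t => deriv (fun s => scaleLagrangian p f s (y t)) (x t)) =ᶠ[𝓝 r]
      fun t => (x t * y t ^ 2) ^ p * boundaryFun p f (x t / y t) / x t := by
    filter_upwards [hnear] with t ⟨hxt, hyt, hft⟩
    exact (hasDerivAt_scaleLagrangian_fst hxt hyt (hft.differentiableAt (by norm_num))).deriv
  have hV : x r * y r ^ 2 ≠ 0 := by positivity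
  have hpow := (hx.mul (hy.pow 2)).rpow_const (p := p) (Or.inl hV)
  have hg := (hasDerivAt_boundaryFun (p := p) hf).comp r (hx.div hy hyr)
  refine ((hpow.mul hg).div hx hxr).congr_of_eventuallyEq hL₁ |>.congr_deriv ?_
  simp only [Pi.mul_apply, Pi.pow_apply, Pi.div_apply, Function.comp_apply]
  rw [Real.rpow_sub_one hV]
  field_simp
  ring

lemma radial_euler_lagrange_eq {h : ℝ} (hf'1 : deriv f 1 = 0) {x y : ℝ → ℝ} {W r : ℝ}
    (hx : HasDerivAt x W r) (hy : HasDerivAt y ((x r - y r) / r) r)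
    (hr : r ≠ 0) (hxr : x r ≠ 0) (hyr : y r ≠ 0) (hf : ContDiffAt ℝ 2 f (x r / y r)) :
    deriv (fun t => deriv (fun s => scaleLagrangian (h / 3) f s (y t)) (x t)) r
        + 2 / r * (deriv (fun s => scaleLagrangian (h / 3) f s (y r)) (x r)
          - 1 / 2 * deriv (fun c => scaleLagrangian (h / 3) f (x r) c) (y r))
      = (x r * y r ^ 2) ^ (h / 3) / x r ^ 2
          * (U1 h f (x r / y r) * W + U2 h f (x r / y r) * (1 / r) * (x r - y r)) := by
  have hf₁ : DifferentiableAt ℝ f (x r / y r) := hf.differentiableAt (by norm_num)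
  rw [(hasDerivAt_deriv_scaleLagrangian_fst_comp hx hy hxr hyr hf).deriv,
    (hasDerivAt_scaleLagrangian_fst hxr hyr hf₁).deriv,
    (hasDerivAt_scaleLagrangian_snd hxr hyr hf₁).deriv]
  have hQ := Qf_mul_sub_one hf'1 (x r / y r)
  unfold U1 U2 kap boundaryFun
  -- in `U₂`, `Qf f u` is multiplied by `(x r - y r) / r = y r (u - 1) / r`
  linear_combination (norm := skip)
    -(x r * y r ^ 2) ^ (h / 3) / x r ^ 2 * (2 * (x r / y r) ^ 2 + (x r / y r) ^ 3) * y r / r * hQ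
  field_simp
  ring

end

lemma strictMonoOn_of_derivWithin_pos {D : Set ℝ} (hD : Convex ℝ D) {g : ℝ → ℝ}
    (hg : ContinuousOn g D) (hg' : ∀ x ∈ interior D, 0 < derivWithin g D x) :
    StrictMonoOn g D :=
  strictMonoOn_of_deriv_pos hD hg fun x hx => by
    rw [← derivWithin_of_mem_nhds (mem_interior_iff_mem_nhds.mp hx)]
    exact hg' x hx

lemma ContDiffOn.hasDerivAt_derivWithin {g : ℝ → ℝ} {s : Set ℝ} {n : WithTop ℕ∞} {r : ℝ}
    (hg : ContDiffOn ℝ n g s) (hn : n ≠ 0) (hs : s ∈ 𝓝 r) :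
    HasDerivAt g (derivWithin g s r) r :=
  ((hg.differentiableOn hn) r (mem_of_mem_nhds hs)).hasDerivWithinAt.hasDerivAt hs

theorem scale_invariant_radial_equation_general
    (h μ : ℝ) (f : ℝ → ℝ)
    (hfC3 : ContDiffOn ℝ 3 f (Set.Ioi 0))
    (hf'1 : deriv f 1 = 0)
    (φ : ℝ → ℝ)
    (hφC2 : ContDiffOn ℝ 2 φ (Set.Icc 0 1))
    (hφ0 : φ 0 = 0)
    (hφ' : ∀ r ∈ Set.Icc (0:ℝ) 1, 0 < derivWithin φ (Set.Icc 0 1) r)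
    (hODE : ∀ r ∈ Set.Ioo (0:ℝ) 1,
      U1 h f (r * derivWithin φ (Set.Icc 0 1) r / φ r)
          * derivWithin (derivWithin φ (Set.Icc 0 1)) (Set.Icc 0 1) r
        + U2 h f (r * derivWithin φ (Set.Icc 0 1) r / φ r)
            * (1 / r) * (derivWithin φ (Set.Icc 0 1) r - φ r / r)
        = μ * r * (derivWithin φ (Set.Icc 0 1) r * (φ r / r) ^ 2) ^ (1 - h / 3)
            * (r * derivWithin φ (Set.Icc 0 1) r / φ r)) :
    (∀ r ∈ Set.Ioo (0:ℝ) 1,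
      deriv (fun t => deriv
          (fun s => (s * (φ t / t) ^ 2) ^ (h / 3) * f (s / (φ t / t)))
          (derivWithin φ (Set.Icc 0 1) t)) r
        + (2 / r) *
          (deriv (fun s => (s * (φ r / r) ^ 2) ^ (h / 3) * f (s / (φ r / r)))
              (derivWithin φ (Set.Icc 0 1) r)
            - (1/2) * deriv
                (fun s => (derivWithin φ (Set.Icc 0 1) r * s ^ 2) ^ (h / 3)
                  * f (derivWithin φ (Set.Icc 0 1) r / s)) (φ r / r))
        = μ * φ r) ∧
    ((h / 3) * f (derivWithin φ (Set.Icc 0 1) 1 / φ 1)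
        + (derivWithin φ (Set.Icc 0 1) 1 / φ 1)
          * deriv f (derivWithin φ (Set.Icc 0 1) 1 / φ 1) = 0 →
      deriv (fun s => (s * (φ 1) ^ 2) ^ (h / 3) * f (s / φ 1))
        (derivWithin φ (Set.Icc 0 1) 1) = 0) := by
  set ψ := derivWithin φ (Icc 0 1)
  have hf : ∀ u, 0 < u → ContDiffAt ℝ 2 f u := fun u hu =>
    (hfC3.contDiffAt (Ioi_mem_nhds hu)).of_le (by norm_num)
  have hφpos : ∀ r ∈ Ioc (0 : ℝ) 1, 0 < φ r := fun r hr => hφ0 ▸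
    strictMonoOn_of_derivWithin_pos (convex_Icc 0 1) hφC2.continuousOn
      (fun x hx => hφ' x (interior_subset hx)) (left_mem_Icc.2 zero_le_one)
      (Ioc_subset_Icc_self hr) hr.1
  refine ⟨fun r hr => ?_, fun hg => ?_⟩
  · have hIcc : Icc (0 : ℝ) 1 ∈ 𝓝 r := Icc_mem_nhds hr.1 hr.2
    have hr0 : r ≠ 0 := hr.1.ne'
    have hφr := hφpos r (Ioo_subset_Ioc_self hr)
    have hψr := hφ' r (Ioo_subset_Icc_self hr)
    have hDφ : HasDerivAt φ (ψ r) r := hφC2.hasDerivAt_derivWithin (by norm_num) hIcc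
    have hDψ : HasDerivAt ψ (derivWithin ψ (Icc 0 1) r) r :=
      (hφC2.derivWithin (uniqueDiffOn_Icc zero_lt_one) (m := 1) le_rfl).hasDerivAt_derivWithin
        one_ne_zero hIcc
    have hDc : HasDerivAt (fun t => φ t / t) ((ψ r - φ r / r) / r) r :=
      (hDφ.div (hasDerivAt_id r) hr0).congr_deriv (by simp only [id]; field_simp)
    have hu : ψ r / (φ r / r) = r * ψ r / φ r := by field_simp
    have hc : 0 < φ r / r := div_pos hφr hr.1
    have hV : 0 < ψ r * (φ r / r) ^ 2 := by positivity
    have hEL := radial_euler_lagrange_eq (h := h) hf'1 hDψ hDc hr0 hψr.ne' hc.ne'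
      (hf _ (div_pos hψr hc))
    rw [hu, hODE r hr] at hEL
    refine hEL.trans ?_
    rw [Real.rpow_sub hV, Real.rpow_one]
    have := (Real.rpow_pos_of_pos hV (h / 3)).ne'
    field_simp
  · have hφ1 := hφpos 1 ⟨one_pos, le_rfl⟩
    have hψ1 := hφ' 1 (right_mem_Icc.2 zero_le_one)
    refine (hasDerivAt_scaleLagrangian_fst hψ1.ne' hφ1.ne'
      ((hf _ (div_pos hψ1 hφ1)).differentiableAt (by norm_num))).deriv.trans ?_
    rw [boundaryFun, hg, mul_zero, zero_div]

/-- Under scale invariance, the radial equation written with the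
coefficients `U₁, U₂` implies the general radial Euler–Lagrange equation, and the
scalar boundary value `g(u(1)) = 0` gives `L,₁(φ'(1),φ(1)) = 0`. -/
theorem scale_invariant_radial_equation
    (h μ : ℝ) (f : ℝ → ℝ)
    (hfC3 : ContDiffOn ℝ 3 f (Set.Ioi 0))
    (hf0 : ∀ u : ℝ, 0 < u → 0 ≤ f u)
    (hf'1 : deriv f 1 = 0)
    (φ : ℝ → ℝ)
    (hφC2 : ContDiffOn ℝ 2 φ (Set.Icc 0 1))
    (hφ0 : φ 0 = 0)
    (hφ''0 : derivWithin (derivWithin φ (Set.Icc 0 1)) (Set.Icc 0 1) 0 = 0)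
    (hφ' : ∀ r ∈ Set.Icc (0:ℝ) 1, 0 < derivWithin φ (Set.Icc 0 1) r)
    (hODE : ∀ r ∈ Set.Ioo (0:ℝ) 1,
      U1 h f (r * derivWithin φ (Set.Icc 0 1) r / φ r)
          * derivWithin (derivWithin φ (Set.Icc 0 1)) (Set.Icc 0 1) r
        + U2 h f (r * derivWithin φ (Set.Icc 0 1) r / φ r)
            * (1 / r) * (derivWithin φ (Set.Icc 0 1) r - φ r / r)
        = μ * r * (derivWithin φ (Set.Icc 0 1) r * (φ r / r) ^ 2) ^ (1 - h / 3)
            * (r * derivWithin φ (Set.Icc 0 1) r / φ r)) :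
    (∀ r ∈ Set.Ioo (0:ℝ) 1,
      deriv (fun t => deriv
          (fun s => (s * (φ t / t) ^ 2) ^ (h / 3) * f (s / (φ t / t)))
          (derivWithin φ (Set.Icc 0 1) t)) r
        + (2 / r) *
          (deriv (fun s => (s * (φ r / r) ^ 2) ^ (h / 3) * f (s / (φ r / r)))
              (derivWithin φ (Set.Icc 0 1) r)
            - (1/2) * deriv
                (fun s => (derivWithin φ (Set.Icc 0 1) r * s ^ 2) ^ (h / 3)
                  * f (derivWithin φ (Set.Icc 0 1) r / s)) (φ r / r))
        = μ * φ r) ∧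
    ((h / 3) * f (derivWithin φ (Set.Icc 0 1) 1 / φ 1)
        + (derivWithin φ (Set.Icc 0 1) 1 / φ 1)
          * deriv f (derivWithin φ (Set.Icc 0 1) 1 / φ 1) = 0 →
      deriv (fun s => (s * (φ 1) ^ 2) ^ (h / 3) * f (s / φ 1))
        (derivWithin φ (Set.Icc 0 1) 1) = 0) :=
  scale_invariant_radial_equation_general h μ f hfC3 hf'1 φ hφC2 hφ0 hφ' hODE
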